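/- (Weak completeness of L.) If φ ∈ Φ and ⊬_L φ, then there is a stochastic game (S, F, D, P, π) and a non-failure state s ∈ F̄ such that s ⊮ φ. -/

import Mathlib

/-- The interval [0,1] of real numbers, used for probability subscripts. -/
abbrev I01 : Type := Set.Icc (0 : ℝ) 1

/-- Formulae of the language Φ: propositional variables, ⊥, negation,
implication, and the coalition modality [C]_p φ with C ⊆ A and p ∈ [0,1]. -/
inductive Formula (A V : Type) : Type where
  | var : V → Formula A V
  | falsum : Formula A V
  | neg : Formula A V → Formula A V
  | imp : Formula A V → Formula A V → Formula A V
  | mod : Set A → I01 → Formula A V → Formula A V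

/-- The constant ⊤, defined in the standard way. -/
def Formula.top {A V : Type} : Formula A V := Formula.neg Formula.falsum

/-- Propositional tautologies: true under every Boolean valuation of formulae
that respects ¬, → and ⊥ (treating variables and modal formulae as atoms). -/
def Tautology {A V : Type} (φ : Formula A V) : Prop :=
  ∀ f : Formula A V → Bool,
    (∀ ψ, f (Formula.neg ψ) = !(f ψ)) →
    (∀ ψ χ, f (Formula.imp ψ χ) = (!(f ψ) || f χ)) →
    f Formula.falsum = false →
    f φ = true

noncomputable def iZero : I01 := ⟨0, by norm_num⟩
noncomputable def iOne : I01 := ⟨1, by norm_num⟩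

/-- The sublanguage Φ⁺: every modality has a nonempty coalition. -/
inductive Formula.InPlus {A V : Type} : Formula A V → Prop where
  | var (v : V) : Formula.InPlus (Formula.var v)
  | falsum : Formula.InPlus Formula.falsum
  | neg {φ} : Formula.InPlus φ → Formula.InPlus (Formula.neg φ)
  | imp {φ ψ} : Formula.InPlus φ → Formula.InPlus ψ →
      Formula.InPlus (Formula.imp φ ψ)
  | mod {C : Set A} (p : I01) {φ} : C.Nonempty → Formula.InPlus φ →
      Formula.InPlus (Formula.mod C p φ)

/-- Theorems of the logical system L (language Φ). -/
inductive LProof {A V : Type} : Formula A V → Prop where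
  | taut {φ : Formula A V} : Tautology φ → LProof φ
  | coop (C₁ C₂ : Set A) (p q : I01) (φ ψ : Formula A V) :
      C₁ ∩ C₂ = ∅ →
      LProof (Formula.imp (Formula.mod C₁ p (Formula.imp φ ψ))
        (Formula.imp (Formula.mod C₂ q φ) (Formula.mod (C₁ ∪ C₂) (max p q) ψ)))
  | mono (C : Set A) (p q : I01) (φ : Formula A V) : q ≤ p →
      LProof (Formula.imp (Formula.mod C p φ) (Formula.mod C q φ))
  | unach (C : Set A) (p : I01) : (0 : ℝ) < (p : ℝ) →
      LProof (Formula.neg (Formula.mod C p Formula.falsum))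
  | mp {φ ψ : Formula A V} : LProof (Formula.imp φ ψ) → LProof φ → LProof ψ
  | nec (C : Set A) {φ : Formula A V} : LProof φ → LProof (Formula.mod C iZero φ)

/-- Theorems of the logical system L⁺ (language Φ⁺):
the axioms of L restricted to Φ⁺, Modus Ponens, Necessitation,
and the Monotonicity inference rule. -/
inductive LPlusProof {A V : Type} : Formula A V → Prop where
  | taut {φ : Formula A V} : Tautology φ → Formula.InPlus φ → LPlusProof φ
  | coop (C₁ C₂ : Set A) (p q : I01) (φ ψ : Formula A V) :
      C₁.Nonempty → C₂.Nonempty → C₁ ∩ C₂ = ∅ →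
      Formula.InPlus φ → Formula.InPlus ψ →
      LPlusProof (Formula.imp (Formula.mod C₁ p (Formula.imp φ ψ))
        (Formula.imp (Formula.mod C₂ q φ) (Formula.mod (C₁ ∪ C₂) (max p q) ψ)))
  | mono (C : Set A) (p q : I01) (φ : Formula A V) :
      C.Nonempty → Formula.InPlus φ → q ≤ p →
      LPlusProof (Formula.imp (Formula.mod C p φ) (Formula.mod C q φ))
  | unach (C : Set A) (p : I01) : C.Nonempty → (0 : ℝ) < (p : ℝ) →
      LPlusProof (Formula.neg (Formula.mod C p Formula.falsum))
  | mp {φ ψ : Formula A V} : LPlusProof (Formula.imp φ ψ) → LPlusProof φ → LPlusProof ψ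
  | nec (C : Set A) {φ : Formula A V} : C.Nonempty → LPlusProof φ →
      LPlusProof (Formula.mod C iZero φ)
  | monoRule (C : Set A) (p : I01) {φ ψ : Formula A V} : C.Nonempty →
      LPlusProof (Formula.imp φ ψ) →
      LPlusProof (Formula.imp (Formula.mod C p φ) (Formula.mod C p ψ))

/-- X ⊢ φ: derivability of φ from the theorems of the system (given by the
theoremhood predicate `Pf`) together with the formulae of X, using only
the Modus Ponens inference rule. -/
inductive Deriv {A V : Type} (Pf : Formula A V → Prop) (X : Set (Formula A V)) :
    Formula A V → Prop where
  | thm {φ} : Pf φ → Deriv Pf X φ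
  | ax {φ} : φ ∈ X → Deriv Pf X φ
  | mp {φ ψ} : Deriv Pf X (Formula.imp φ ψ) → Deriv Pf X φ → Deriv Pf X ψ

/-- A set X is consistent if X ⊬ ⊥. -/
def Consistent {A V : Type} (Pf : Formula A V → Prop) (X : Set (Formula A V)) : Prop :=
  ¬ Deriv Pf X Formula.falsum

/-- A maximal consistent subset of a given language `Lang`. -/
def MaxConsistentIn {A V : Type} (Pf : Formula A V → Prop)
    (Lang : Set (Formula A V)) (X : Set (Formula A V)) : Prop :=
  X ⊆ Lang ∧ Consistent Pf X ∧
    ∀ Y : Set (Formula A V), Y ⊆ Lang → Consistent Pf Y → X ⊆ Y → Y = X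

/-- A stochastic game (S, F, D, P, π). -/
structure Game (A V : Type) where
  S : Type
  F : Set S
  D : Type
  D_nonempty : Nonempty D
  P : S → (A → D) → S → ℝ
  P_nonneg : ∀ s δ s', 0 ≤ P s δ s'
  P_le_one : ∀ s δ s', P s δ s' ≤ 1
  P_sum : ∀ s δ, HasSum (P s δ) 1
  pi : V → Set S

/-- Satisfaction s ⊩ φ, for the game with failure states F, transition
probabilities P and valuation π.  In the modal clause, δ ranges over action
profiles of the coalition C and δ' over complete action profiles extending δ. -/
def SatGen {A V S D : Type} (F : Set S) (P : S → (A → D) → S → ℝ)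
    (π : V → Set S) : Formula A V → S → Prop
  | Formula.var v, s => s ∈ π v
  | Formula.falsum, _ => False
  | Formula.neg φ, s => ¬ SatGen F P π φ s
  | Formula.imp φ ψ, s => SatGen F P π φ s → SatGen F P π ψ s
  | Formula.mod C p φ, s =>
      ∃ δ : ↥C → D, ∀ δ' : A → D, (∀ a : ↥C, δ' a.1 = δ a) →
        ((p : ℝ) ≤ ∑' t : ↥(Fᶜ), P s δ' t.1) ∧
        (∀ t : S, t ∉ F → 0 < P s δ' t → SatGen F P π φ t)

/-- Semantic entailment X ⊨ φ over all stochastic games and their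
non-failure states. -/
def Entails {A V : Type} (X : Set (Formula A V)) (φ : Formula A V) : Prop :=
  ∀ (G : Game A V) (s : G.S), s ∉ G.F →
    (∀ χ ∈ X, SatGen G.F G.P G.pi χ s) → SatGen G.F G.P G.pi φ s

/-- The subscript 1 − 10⁻ⁿ as an element of [0,1]. -/
noncomputable def oneMinusTenPow (n : ℕ) : I01 :=
  ⟨1 - (1 / 10 : ℝ) ^ n, by
    constructor
    · have h : (1 / 10 : ℝ) ^ n ≤ 1 := pow_le_one₀ (by norm_num) (by norm_num)
      linarith
    · have h : (0 : ℝ) ≤ (1 / 10 : ℝ) ^ n := by positivity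
      linarith⟩

/- ## The canonical stochastic game G(Ψ,Σ) -/

/-- Σ is closed with respect to subformulae. -/
def SubfClosed {A V : Type} (Sgm : Set (Formula A V)) : Prop :=
  (∀ φ, Formula.neg φ ∈ Sgm → φ ∈ Sgm) ∧
  (∀ φ ψ, Formula.imp φ ψ ∈ Sgm → φ ∈ Sgm ∧ ψ ∈ Sgm) ∧
  (∀ (C : Set A) (p : I01) φ, Formula.mod C p φ ∈ Sgm → φ ∈ Sgm)

/-- If σ ∈ Σ then ¬σ ∈ Σ, unless σ is itself a negation. -/
def NegClosed {A V : Type} (Sgm : Set (Formula A V)) : Prop :=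
  ∀ σ ∈ Sgm, (∀ τ, σ ≠ Formula.neg τ) → Formula.neg σ ∈ Sgm

/-- Non-failure states of the canonical game: maximal consistent subsets of Σ. -/
abbrev CanState {A V : Type} (Pf : Formula A V → Prop) (Sgm : Set (Formula A V)) : Type :=
  {s : Set (Formula A V) // MaxConsistentIn Pf Sgm s}

/-- The domain of actions of the canonical game: pairs (φ,p) with φ ∈ Σ and
p an arbitrary real number. -/
abbrev CanD {A V : Type} (Sgm : Set (Formula A V)) : Type := ↥Sgm × ℝ

/-- The set { p | [C]_p φ ∈ s and δ(a) = (φ,p) for all a ∈ C }. -/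
def muSet {A V : Type} (Pf : Formula A V → Prop) (Sgm : Set (Formula A V))
    (s : CanState Pf Sgm) (δ : A → CanD Sgm) : Set ℝ :=
  {r | ∃ (C : Set A) (p : I01) (φ : Formula A V), (p : ℝ) = r ∧
    Formula.mod C p φ ∈ s.1 ∧ ∀ a ∈ C, (δ a).1.1 = φ ∧ (δ a).2 = (p : ℝ)}

/-- μ(s,δ) = max{ p | [C]_p φ ∈ s and δ(a) = (φ,p) for all a ∈ C },
the maximum of the empty set being 0. -/
noncomputable def muCan {A V : Type} (Pf : Formula A V → Prop) (Sgm : Set (Formula A V))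
    (s : CanState Pf Sgm) (δ : A → CanD Sgm) : ℝ :=
  sSup (insert 0 (muSet Pf Sgm s δ))

/-- T(s,δ): all non-failure states s' with
{ φ | [C]_p φ ∈ s and δ(a) = (φ,p) for all a ∈ C } ⊆ s'. -/
def TCan {A V : Type} (Pf : Formula A V → Prop) (Sgm : Set (Formula A V))
    (s : CanState Pf Sgm) (δ : A → CanD Sgm) : Set (CanState Pf Sgm) :=
  {s' | ∀ φ : Formula A V,
    (∃ (C : Set A) (p : I01), Formula.mod C p φ ∈ s.1 ∧
      ∀ a ∈ C, (δ a).1.1 = φ ∧ (δ a).2 = (p : ℝ)) → φ ∈ s'.1}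

-- The transition probabilities of the canonical game; `none` is the failure state f.
open Classical in
noncomputable def PCan {A V : Type} (Pf : Formula A V → Prop) (Sgm : Set (Formula A V))
    (s : Option (CanState Pf Sgm)) (δ : A → CanD Sgm)
    (s' : Option (CanState Pf Sgm)) : ℝ :=
  match s, s' with
  | none, none => 1
  | none, some _ => 0
  | some t, none => 1 - muCan Pf Sgm t δ
  | some t, some t' =>
      if t' ∈ TCan Pf Sgm t δ then muCan Pf Sgm t δ / (TCan Pf Sgm t δ).ncard else 0

/-- The valuation of the canonical game: π(v) = { s ∈ F̄ | v ∈ s }. -/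
def piCan {A V : Type} (Pf : Formula A V → Prop) (Sgm : Set (Formula A V))
    (v : V) : Set (Option (CanState Pf Sgm)) :=
  {x | ∃ t : CanState Pf Sgm, x = some t ∧ Formula.var v ∈ t.1}

/-!
Canonical model. Take a finite set `Σ` of formulas closed under subformulas and single negation;
the non-failure states are the maximal consistent subsets of `Σ`. An action is a pair `(χ, p)`,
and under a profile `δ` a state `s` forces every `χ` for which some `[C]_p χ ∈ s` has all of `C`
playing `(χ, p)`; `μ(s, δ)` is the largest such `p`. The state moves with probability
`min 1 (μ + ε)` uniformly to the states containing the forced goals, and otherwise fails.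
Cooperation turns a derivation of `ψ` from the forced goals into `[C]_μ ψ ∈ s`, so a truth lemma
`s ⊩ σ ↔ σ ∈ s` holds on `Σ` once `ε > 0` is smaller than every gap between subscripts
occurring in `Σ`. A maximal consistent set omitting the unprovable `φ` refutes it.
-/

open Formula

variable {A V : Type}

namespace Formula

def subscript : Formula A V → ℝ
  | mod _ p _ => p
  | _ => 0

def subformulas : Formula A V → Set (Formula A V)
  | var v => {var v}
  | falsum => {falsum}
  | neg ψ => insert (neg ψ) ψ.subformulas
  | imp ψ χ => insert (imp ψ χ) (ψ.subformulas ∪ χ.subformulas)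
  | mod C p ψ => insert (mod C p ψ) ψ.subformulas

theorem mem_subformulas_self (φ : Formula A V) : φ ∈ φ.subformulas := by
  cases φ <;> simp [subformulas]

theorem finite_subformulas (φ : Formula A V) : φ.subformulas.Finite := by
  induction φ with
  | var v => exact Set.finite_singleton _
  | falsum => exact Set.finite_singleton _
  | neg ψ ih => exact ih.insert _
  | imp ψ χ ih₁ ih₂ => exact (ih₁.union ih₂).insert _
  | mod C p ψ ih => exact ih.insert _

theorem subformulas_subset {φ ψ : Formula A V} (h : ψ ∈ φ.subformulas) :
    ψ.subformulas ⊆ φ.subformulas := by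
  induction φ with
  | var v | falsum => simp only [subformulas, Set.mem_singleton_iff] at h; subst h; rfl
  | neg χ ih | mod C p χ ih =>
    rcases h with rfl | h
    · rfl
    · exact (ih h).trans (Set.subset_insert _ _)
  | imp χ₁ χ₂ ih₁ ih₂ =>
    rcases h with rfl | h | h
    · rfl
    · exact (ih₁ h).trans (Set.subset_union_left.trans (Set.subset_insert _ _))
    · exact (ih₂ h).trans (Set.subset_union_right.trans (Set.subset_insert _ _))

def negClosure (φ : Formula A V) : Set (Formula A V) :=
  φ.subformulas ∪ neg '' φ.subformulas

theorem finite_negClosure (φ : Formula A V) : φ.negClosure.Finite :=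
  (finite_subformulas φ).union ((finite_subformulas φ).image _)

theorem subfClosed_negClosure (φ : Formula A V) : SubfClosed φ.negClosure := by
  have hsub {ψ χ : Formula A V} (hχ : χ ∈ ψ.subformulas) (hψ : ψ ∈ φ.subformulas) :
      χ ∈ φ.negClosure :=
    Or.inl (subformulas_subset hψ hχ)
  refine ⟨fun ψ h => ?_, fun ψ χ h => ?_, fun C p ψ h => ?_⟩
  · rcases h with h | ⟨τ, hτ, ⟨⟩⟩
    · exact hsub (by simp [subformulas, mem_subformulas_self]) h
    · exact Or.inl hτ
  · obtain h | ⟨_, _, ⟨⟩⟩ := h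
    exact ⟨hsub (by simp [subformulas, mem_subformulas_self]) h,
      hsub (by simp [subformulas, mem_subformulas_self]) h⟩
  · obtain h | ⟨_, _, ⟨⟩⟩ := h
    exact hsub (by simp [subformulas, mem_subformulas_self]) h

theorem negClosed_negClosure (φ : Formula A V) : NegClosed φ.negClosure := by
  rintro σ (h | ⟨τ, _, rfl⟩) hσ
  · exact Or.inr ⟨σ, h, rfl⟩
  · exact absurd rfl (hσ τ)

theorem mem_negClosure_self (φ : Formula A V) : φ ∈ φ.negClosure :=
  Or.inl (mem_subformulas_self φ)

end Formula

namespace LProof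

theorem weakening (φ ψ : Formula A V) : LProof (imp φ (imp ψ φ)) :=
  taut fun f _ hi _ => by simp only [hi]; cases f φ <;> cases f ψ <;> rfl

theorem imp_distrib (φ ψ χ : Formula A V) :
    LProof (imp (imp φ (imp ψ χ)) (imp (imp φ ψ) (imp φ χ))) :=
  taut fun f _ hi _ => by simp only [hi]; cases f φ <;> cases f ψ <;> cases f χ <;> rfl

theorem imp_self (φ : Formula A V) : LProof (imp φ φ) :=
  taut fun f _ hi _ => by simp only [hi]; cases f φ <;> rfl

theorem contradiction (φ : Formula A V) : LProof (imp φ (imp (neg φ) falsum)) :=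
  taut fun f hn hi hf => by simp only [hi, hn, hf]; cases f φ <;> rfl

theorem of_neg_imp_falsum (φ : Formula A V) : LProof (imp (imp (neg φ) falsum) φ) :=
  taut fun f hn hi hf => by simp only [hi, hn, hf]; cases f φ <;> rfl

theorem neg_of_imp_falsum (φ : Formula A V) : LProof (imp (imp φ falsum) (neg φ)) :=
  taut fun f hn hi hf => by simp only [hi, hn, hf]; cases f φ <;> rfl

theorem explosion (φ ψ : Formula A V) : LProof (imp (imp φ falsum) (imp φ ψ)) :=
  taut fun f _ hi hf => by simp only [hi, hf]; cases f φ <;> cases f ψ <;> rfl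

end LProof

namespace Deriv

variable {Pf : Formula A V → Prop} {X Y : Set (Formula A V)} {φ ψ : Formula A V}

theorem mp_thm (h : Pf (imp φ ψ)) (hφ : Deriv Pf X φ) : Deriv Pf X ψ :=
  mp (thm h) hφ

theorem mono (hXY : X ⊆ Y) (h : Deriv Pf X φ) : Deriv Pf Y φ := by
  induction h with
  | thm h => exact thm h
  | ax h => exact ax (hXY h)
  | mp _ _ ih₁ ih₂ => exact mp ih₁ ih₂

theorem exists_finset (h : Deriv Pf X φ) :
    ∃ Γ : Finset (Formula A V), ↑Γ ⊆ X ∧ Deriv Pf ↑Γ φ := by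
  classical
  induction h with
  | thm h => exact ⟨∅, by simp, thm h⟩
  | @ax φ h => exact ⟨{φ}, by simpa using h, ax (by simp)⟩
  | mp _ _ ih₁ ih₂ =>
    obtain ⟨Γ₁, hΓ₁, h₁⟩ := ih₁
    obtain ⟨Γ₂, hΓ₂, h₂⟩ := ih₂
    refine ⟨Γ₁ ∪ Γ₂, by simpa using ⟨hΓ₁, hΓ₂⟩, mp (h₁.mono ?_) (h₂.mono ?_)⟩
    all_goals simp

theorem deduction (h : Deriv LProof (insert φ X) ψ) : Deriv LProof X (imp φ ψ) := by
  induction h with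
  | thm h => exact mp_thm (LProof.weakening _ _) (thm h)
  | ax h =>
    rcases h with rfl | h
    · exact thm (LProof.imp_self _)
    · exact mp_thm (LProof.weakening _ _) (ax h)
  | mp _ _ ih₁ ih₂ => exact mp (mp_thm (LProof.imp_distrib _ _ _) ih₁) ih₂

end Deriv

theorem LProof.of_deriv_empty {φ : Formula A V} (h : Deriv LProof ∅ φ) : LProof φ := by
  induction h with
  | thm h => exact h
  | ax h => exact absurd h (Set.notMem_empty _)
  | mp _ _ ih₁ ih₂ => exact LProof.mp ih₁ ih₂

theorem Consistent.neg_notMem {X : Set (Formula A V)} (hX : Consistent LProof X)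
    {φ : Formula A V} (h : φ ∈ X) : neg φ ∉ X := fun hn =>
  hX (.mp (.mp_thm (LProof.contradiction φ) (.ax h)) (.ax hn))

namespace MaxConsistentIn

variable {Pf : Formula A V → Prop} {Sgm X : Set (Formula A V)} {φ ψ : Formula A V}

theorem mem_of_deriv (hX : MaxConsistentIn LProof Sgm X) (hφ : φ ∈ Sgm)
    (h : Deriv LProof X φ) : φ ∈ X := by
  have hcons : Consistent LProof (insert φ X) := fun hbot =>
    hX.2.1 (.mp (Deriv.deduction hbot) h)
  rw [← hX.2.2 _ (Set.insert_subset hφ hX.1) hcons (Set.subset_insert _ _)]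
  exact Set.mem_insert _ _

theorem deriv_imp_falsum (hX : MaxConsistentIn LProof Sgm X) (hφ : φ ∈ Sgm) (h : φ ∉ X) :
    Deriv LProof X (imp φ falsum) := by
  refine Deriv.deduction (by_contra fun hcons => h ?_)
  rw [← hX.2.2 _ (Set.insert_subset hφ hX.1) hcons (Set.subset_insert _ _)]
  exact Set.mem_insert _ _

theorem falsum_notMem (hX : MaxConsistentIn Pf Sgm X) : falsum ∉ X := fun h =>
  hX.2.1 (.ax h)

theorem neg_mem_iff (hX : MaxConsistentIn LProof Sgm X) (hφ : φ ∈ Sgm) (hnφ : neg φ ∈ Sgm) :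
    neg φ ∈ X ↔ φ ∉ X :=
  ⟨fun hn h => hX.2.1.neg_notMem h hn, fun h =>
    hX.mem_of_deriv hnφ (.mp_thm (LProof.neg_of_imp_falsum φ) (hX.deriv_imp_falsum hφ h))⟩

theorem imp_mem_iff (hX : MaxConsistentIn LProof Sgm X) (himp : imp φ ψ ∈ Sgm)
    (hφ : φ ∈ Sgm) (hψ : ψ ∈ Sgm) : imp φ ψ ∈ X ↔ (φ ∈ X → ψ ∈ X) := by
  refine ⟨fun h hφX => hX.mem_of_deriv hψ (.mp (.ax h) (.ax hφX)), fun h => ?_⟩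
  by_cases hφX : φ ∈ X
  · exact hX.mem_of_deriv himp (.mp_thm (LProof.weakening ψ φ) (.ax (h hφX)))
  · exact hX.mem_of_deriv himp (.mp_thm (LProof.explosion φ ψ) (hX.deriv_imp_falsum hφ hφX))

end MaxConsistentIn

theorem exists_maxConsistentIn_superset {Pf : Formula A V → Prop} {Sgm X : Set (Formula A V)}
    (hSgm : Sgm.Finite) (hXS : X ⊆ Sgm) (hX : Consistent Pf X) :
    ∃ Y, X ⊆ Y ∧ MaxConsistentIn Pf Sgm Y := by
  have hfin : {Z | Z ⊆ Sgm ∧ Consistent Pf Z}.Finite :=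
    hSgm.finite_subsets.subset fun _ hZ => hZ.1
  obtain ⟨Y, hXY, hY⟩ := hfin.exists_le_maximal ⟨hXS, hX⟩
  exact ⟨Y, hXY, hY.prop.1, hY.prop.2, fun Z hZS hZ hYZ => hY.eq_of_superset ⟨hZS, hZ⟩ hYZ⟩

/-- `¬ψ` may lie outside `Sgm`; when `ψ = ¬τ` the extension is built around `τ` instead. -/
theorem exists_maxConsistentIn_notMem {Sgm X : Set (Formula A V)} (hSgm : Sgm.Finite)
    (hsub : SubfClosed Sgm) (hneg : NegClosed Sgm) (hXS : X ⊆ Sgm) {ψ : Formula A V}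
    (hψ : ψ ∈ Sgm) (h : ¬ Deriv LProof X ψ) :
    ∃ Y, X ⊆ Y ∧ MaxConsistentIn LProof Sgm Y ∧ ψ ∉ Y := by
  by_cases hψneg : ∃ τ, ψ = neg τ
  · obtain ⟨τ, rfl⟩ := hψneg
    have hcons : Consistent LProof (insert τ X) := fun hbot =>
      h (.mp_thm (LProof.neg_of_imp_falsum τ) (Deriv.deduction hbot))
    obtain ⟨Y, hXY, hY⟩ :=
      exists_maxConsistentIn_superset hSgm (Set.insert_subset (hsub.1 τ hψ) hXS) hcons
    exact ⟨Y, (Set.subset_insert _ _).trans hXY, hY,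
      hY.2.1.neg_notMem (hXY (Set.mem_insert _ _))⟩
  · simp only [not_exists] at hψneg
    have hcons : Consistent LProof (insert (neg ψ) X) := fun hbot =>
      h (.mp_thm (LProof.of_neg_imp_falsum ψ) (Deriv.deduction hbot))
    obtain ⟨Y, hXY, hY⟩ :=
      exists_maxConsistentIn_superset hSgm (Set.insert_subset (hneg ψ hψ hψneg) hXS) hcons
    exact ⟨Y, (Set.subset_insert _ _).trans hXY, hY,
      fun hψY => hY.2.1.neg_notMem hψY (hXY (Set.mem_insert _ _))⟩

theorem iZero_le (p : I01) : iZero ≤ p := p.2.1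

namespace Deriv

variable {X : Set (Formula A V)} {C C₁ C₂ D : Set A} {p q : I01} {φ ψ : Formula A V}

theorem mod_mono (h : Deriv LProof X (mod C p φ)) (hqp : q ≤ p) :
    Deriv LProof X (mod C q φ) :=
  mp_thm (LProof.mono C p q φ hqp) h

theorem mod_coop (h₁ : Deriv LProof X (mod C₁ p (imp φ ψ)))
    (h₂ : Deriv LProof X (mod C₂ q φ)) (hC : Disjoint C₁ C₂) :
    Deriv LProof X (mod (C₁ ∪ C₂) (max p q) ψ) :=
  mp (mp_thm (LProof.coop C₁ C₂ p q φ ψ (Set.disjoint_iff_inter_eq_empty.mp hC)) h₁) h₂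

/-- The outsiders `D \ C` join in, achieving `φ → φ` with probability `0`. -/
theorem mod_of_subset (h : Deriv LProof X (mod C p φ)) (hCD : C ⊆ D) :
    Deriv LProof X (mod D p φ) := by
  have h' := (thm (LProof.nec (D \ C) (LProof.imp_self φ))).mod_coop h Set.disjoint_sdiff_left
  rwa [Set.sdiff_union_of_subset hCD, max_eq_right (iZero_le p)] at h'

end Deriv

/-- The labelling `g` makes the coalitions `c χ` pairwise disjoint, so Cooperation applies
goal by goal. -/
theorem exists_deriv_mod_biUnion {X : Set (Formula A V)} (g : A → Formula A V)
    (c : Formula A V → Set A) (r : Formula A V → I01) {Γ : Finset (Formula A V)}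
    (hX : ∀ χ ∈ Γ, mod (c χ) (r χ) χ ∈ X) (hc : ∀ χ ∈ Γ, ∀ a ∈ c χ, g a = χ)
    {θ : Formula A V} (hθ : Deriv LProof ↑Γ θ) :
    ∃ q, Deriv LProof X (mod (⋃ χ ∈ Γ, c χ) q θ) := by
  classical
  induction Γ using Finset.induction_on generalizing θ with
  | empty =>
    refine ⟨iZero, ?_⟩
    simpa using Deriv.thm (LProof.nec ∅ (LProof.of_deriv_empty (by simpa using hθ)))
  | insert χ Γ hχ ih =>
    rw [Finset.coe_insert] at hθ
    obtain ⟨q, hq⟩ := ih (fun ψ hψ => hX ψ (Finset.mem_insert_of_mem hψ))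
      (fun ψ hψ => hc ψ (Finset.mem_insert_of_mem hψ)) (Deriv.deduction hθ)
    have hdisj : Disjoint (⋃ ψ ∈ Γ, c ψ) (c χ) := by
      simp only [Set.disjoint_left, Set.mem_iUnion]
      rintro a ⟨ψ, hψ, ha⟩ haχ
      have hψχ : ψ = χ := (hc ψ (Finset.mem_insert_of_mem hψ) a ha).symm.trans
        (hc χ (Finset.mem_insert_self χ Γ) a haχ)
      exact hχ (hψχ ▸ hψ)
    refine ⟨max q (r χ), ?_⟩
    rw [Finset.set_biUnion_insert, Set.union_comm]
    exact hq.mod_coop (.ax (hX χ (Finset.mem_insert_self χ Γ))) hdisj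

def subscripts (Sgm : Set (Formula A V)) : Set ℝ := insert 0 (Formula.subscript '' Sgm)

def BelowSubscriptGaps (Sgm : Set (Formula A V)) (ε : ℝ) : Prop :=
  ∀ a ∈ subscripts Sgm, ∀ b ∈ subscripts Sgm, a < b → a + ε < b

theorem finite_subscripts {Sgm : Set (Formula A V)} (hSgm : Sgm.Finite) :
    (subscripts Sgm).Finite :=
  (hSgm.image _).insert 0

theorem exists_pos_add_lt_of_finite {Q : Set ℝ} (hQ : Q.Finite) :
    ∃ ε > 0, ∀ a ∈ Q, ∀ b ∈ Q, a < b → a + ε < b := by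
  have h : ∀ᶠ ε in nhdsWithin (0 : ℝ) (Set.Ioi 0),
      ∀ a ∈ Q, ∀ b ∈ Q, a < b → a + ε < b := by
    simp only [Filter.eventually_all_finite hQ]
    intro a _ b _
    by_cases hab : a < b
    · filter_upwards [nhdsWithin_le_nhds (gt_mem_nhds (sub_pos.2 hab))] with ε hε _
      linarith
    · exact Filter.Eventually.of_forall fun _ h => absurd h hab
  obtain ⟨ε, hgap, hε⟩ := (h.and self_mem_nhdsWithin).exists
  exact ⟨ε, hε, hgap⟩

section Canonical

variable {Pf : Formula A V → Prop} {Sgm : Set (Formula A V)}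

theorem finite_canState (hSgm : Sgm.Finite) : Finite (CanState Pf Sgm) :=
  have := hSgm.finite_subsets.to_subtype
  Finite.of_injective (fun s : CanState Pf Sgm => (⟨s.1, s.2.1⟩ : {Y | Y ⊆ Sgm}))
    fun _ _ h => Subtype.ext (by simpa using h)

def forcedCan (s : CanState Pf Sgm) (δ : A → CanD Sgm) : Set (Formula A V) :=
  {φ | ∃ (C : Set A) (p : I01), mod C p φ ∈ s.1 ∧
    ∀ a ∈ C, (δ a).1.1 = φ ∧ (δ a).2 = (p : ℝ)}

theorem mem_TCan_iff {s t : CanState Pf Sgm} {δ : A → CanD Sgm} :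
    t ∈ TCan Pf Sgm s δ ↔ forcedCan s δ ⊆ t.1 :=
  Iff.rfl

theorem forcedCan_subset (hsub : SubfClosed Sgm) (s : CanState Pf Sgm) (δ : A → CanD Sgm) :
    forcedCan s δ ⊆ Sgm :=
  fun φ ⟨C, p, h, _⟩ => hsub.2.2 C p φ (s.2.1 h)

theorem TCan_nonempty_iff (hSgm : Sgm.Finite) (hsub : SubfClosed Sgm)
    (s : CanState LProof Sgm) (δ : A → CanD Sgm) :
    (TCan LProof Sgm s δ).Nonempty ↔ Consistent LProof (forcedCan s δ) := by
  constructor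
  · rintro ⟨t, ht⟩ hbot
    exact t.2.2.1 (hbot.mono ht)
  · intro hcons
    obtain ⟨Y, hY, hmax⟩ :=
      exists_maxConsistentIn_superset hSgm (forcedCan_subset hsub s δ) hcons
    exact ⟨⟨Y, hmax⟩, hY⟩

theorem muSet_subset_subscript (s : CanState Pf Sgm) (δ : A → CanD Sgm) :
    muSet Pf Sgm s δ ⊆ Formula.subscript '' Sgm := by
  rintro _ ⟨C, p, φ, rfl, h, _⟩
  exact ⟨mod C p φ, s.2.1 h, rfl⟩

theorem bddAbove_muSet (s : CanState Pf Sgm) (δ : A → CanD Sgm) :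
    BddAbove (insert 0 (muSet Pf Sgm s δ)) := by
  refine ⟨1, ?_⟩
  rintro _ (rfl | ⟨_, p, _, rfl, _⟩)
  exacts [zero_le_one, p.2.2]

theorem le_muCan {s : CanState Pf Sgm} {δ : A → CanD Sgm} {r : ℝ}
    (hr : r ∈ muSet Pf Sgm s δ) :
    r ≤ muCan Pf Sgm s δ :=
  le_csSup (bddAbove_muSet s δ) (Set.mem_insert_of_mem 0 hr)

theorem muCan_nonneg (s : CanState Pf Sgm) (δ : A → CanD Sgm) : 0 ≤ muCan Pf Sgm s δ :=
  le_csSup (bddAbove_muSet s δ) (Set.mem_insert 0 _)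

theorem muCan_mem (hSgm : Sgm.Finite) (s : CanState Pf Sgm) (δ : A → CanD Sgm) :
    muCan Pf Sgm s δ ∈ insert 0 (muSet Pf Sgm s δ) :=
  (Set.insert_nonempty _ _).csSup_mem
    (((hSgm.image _).subset (muSet_subset_subscript s δ)).insert 0)

theorem muCan_mem_subscripts (hSgm : Sgm.Finite) (s : CanState Pf Sgm) (δ : A → CanD Sgm) :
    muCan Pf Sgm s δ ∈ subscripts Sgm :=
  Set.insert_subset_insert (muSet_subset_subscript s δ) (muCan_mem hSgm s δ)

theorem exists_deriv_mod_of_deriv_subset_forcedCan {s : CanState LProof Sgm}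
    {δ : A → CanD Sgm} {Y : Set (Formula A V)} (hY : Y ⊆ forcedCan s δ) {θ : Formula A V}
    (hθ : Deriv LProof Y θ) :
    ∃ U : Set A, (∀ a ∈ U, (δ a).1.1 ∈ Y ∧ (δ a).2 ≤ 1) ∧
      ∃ q, Deriv LProof s.1 (mod U q θ) := by
  obtain ⟨Γ, hΓY, hΓ⟩ := hθ.exists_finset
  have hwit : ∀ χ ∈ Γ, ∃ Cp : Set A × I01,
      mod Cp.1 Cp.2 χ ∈ s.1 ∧ ∀ a ∈ Cp.1, (δ a).1.1 = χ ∧ (δ a).2 = Cp.2 :=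
    fun χ hχ => let ⟨C, p, h⟩ := hY (hΓY hχ); ⟨(C, p), h⟩
  choose! w hw using hwit
  obtain ⟨q, hq⟩ := exists_deriv_mod_biUnion (fun a => (δ a).1.1) (fun χ => (w χ).1)
    (fun χ => (w χ).2) (fun χ hχ => (hw χ hχ).1)
    (fun χ hχ a ha => ((hw χ hχ).2 a ha).1) hΓ
  refine ⟨_, ?_, q, hq⟩
  simp only [Set.mem_iUnion]
  rintro a ⟨χ, hχ, ha⟩
  obtain ⟨hχa, hpa⟩ := (hw χ hχ).2 a ha
  exact ⟨hχa ▸ hΓY hχ, hpa ▸ (w χ).2.2.2⟩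

theorem deriv_mod_of_deriv_forcedCan (hSgm : Sgm.Finite) {s : CanState LProof Sgm}
    {δ : A → CanD Sgm} {C : Set A} (hC : ∀ a ∉ C, 1 < (δ a).2) {ψ : Formula A V}
    (hψ : Deriv LProof (forcedCan s δ) ψ) {q : I01} (hq : (q : ℝ) ≤ muCan LProof Sgm s δ) :
    Deriv LProof s.1 (mod C q ψ) := by
  have hmemC : ∀ a, (δ a).2 ≤ 1 → a ∈ C := fun a ha =>
    by_contra fun haC => (hC a haC).not_ge ha
  rcases muCan_mem hSgm s δ with hμ | ⟨C₀, p₀, χ₀, hp₀, h₀, hδ₀⟩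
  · obtain ⟨U, hU, q', hq'⟩ := exists_deriv_mod_of_deriv_subset_forcedCan subset_rfl hψ
    have hqq' : q ≤ q' := Subtype.coe_le_coe.1 ((hq.trans hμ.le).trans q'.2.1)
    exact (hq'.mod_mono hqq').mod_of_subset fun a ha => hmemC a (hU a ha).2
  · -- the modality `[C₀]_{p₀} χ₀` attaining `μ` joins the coalition last
    have hinsert : forcedCan s δ ⊆ insert χ₀ (forcedCan s δ \ {χ₀}) := by simp
    obtain ⟨U, hU, q', hq'⟩ := exists_deriv_mod_of_deriv_subset_forcedCan Set.sdiff_subset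
      (Deriv.deduction (hψ.mono hinsert))
    have hdisj : Disjoint U C₀ :=
      Set.disjoint_left.2 fun a haU ha₀ => (hU a haU).1.2 (hδ₀ a ha₀).1
    have hqp₀ : q ≤ max q' p₀ := le_max_of_le_right (Subtype.coe_le_coe.1 (hq.trans hp₀.ge))
    refine ((hq'.mod_coop (.ax h₀) hdisj).mod_mono hqp₀).mod_of_subset ?_
    exact Set.union_subset (fun a ha => hmemC a (hU a ha).2)
      fun a ha => hmemC a ((hδ₀ a ha).2 ▸ p₀.2.2)

/-- The slack `ε` keeps the mass positive while keeping it below every larger subscript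
(`massCan_lt`). -/
noncomputable def massCan (ε : ℝ) (s : CanState Pf Sgm) (δ : A → CanD Sgm) : ℝ :=
  open Classical in
  if (TCan Pf Sgm s δ).Nonempty then min 1 (muCan Pf Sgm s δ + ε) else 0

noncomputable def transCan (ε : ℝ) :
    Option (CanState Pf Sgm) → (A → CanD Sgm) → Option (CanState Pf Sgm) → ℝ
  | none, _, none => 1
  | none, _, some _ => 0
  | some s, δ, none => 1 - massCan ε s δ
  | some s, δ, some t =>
      (TCan Pf Sgm s δ).indicator (fun _ => massCan ε s δ / (TCan Pf Sgm s δ).ncard) t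

variable {ε : ℝ}

theorem massCan_nonneg (hε : 0 ≤ ε) (s : CanState Pf Sgm) (δ : A → CanD Sgm) :
    0 ≤ massCan ε s δ := by
  unfold massCan
  split_ifs
  · exact le_min zero_le_one (add_nonneg (muCan_nonneg s δ) hε)
  · exact le_rfl

theorem massCan_le_one (s : CanState Pf Sgm) (δ : A → CanD Sgm) : massCan ε s δ ≤ 1 := by
  unfold massCan
  split_ifs
  exacts [min_le_left _ _, zero_le_one]

theorem massCan_pos (hε : 0 < ε) {s : CanState Pf Sgm} {δ : A → CanD Sgm}
    (hT : (TCan Pf Sgm s δ).Nonempty) : 0 < massCan ε s δ := by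
  rw [massCan, if_pos hT]
  exact lt_min zero_lt_one (by linarith [muCan_nonneg s δ])

theorem massCan_lt (hSgm : Sgm.Finite) (hgap : BelowSubscriptGaps Sgm ε) {s : CanState Pf Sgm}
    {δ : A → CanD Sgm} {p : ℝ}
    (hp : p ∈ subscripts Sgm) (hμp : muCan Pf Sgm s δ < p) : massCan ε s δ < p := by
  unfold massCan
  split_ifs
  · exact (min_le_right _ _).trans_lt (hgap _ (muCan_mem_subscripts hSgm s δ) p hp hμp)
  · exact (muCan_nonneg s δ).trans_lt hμp

/-- If no successor exists, the forced goals are inconsistent, and Unachievability of Falsehood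
forces the subscript to be `0`. -/
theorem le_massCan (hSgm : Sgm.Finite) (hsub : SubfClosed Sgm) (hε : 0 ≤ ε)
    {s : CanState LProof Sgm} {δ : A → CanD Sgm} {r : ℝ} (hr : r ∈ muSet LProof Sgm s δ) :
    r ≤ massCan ε s δ := by
  unfold massCan
  split_ifs with hT
  · obtain ⟨_, p, _, rfl, _⟩ := id hr
    exact le_min p.2.2 (by linarith [le_muCan hr])
  · rw [TCan_nonempty_iff hSgm hsub, Consistent, not_not] at hT
    obtain ⟨_, p, _, rfl, _⟩ := id hr
    by_contra hp
    have hdmod := deriv_mod_of_deriv_forcedCan hSgm (C := Set.univ) (by simp) hT (le_muCan hr)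
    exact s.2.2.1 (.mp (.mp_thm (LProof.contradiction _) hdmod)
      (.thm (LProof.unach Set.univ p (not_le.1 hp))))

theorem transCan_nonneg (hε : 0 ≤ ε) (x : Option (CanState Pf Sgm)) (δ : A → CanD Sgm)
    (y : Option (CanState Pf Sgm)) : 0 ≤ transCan ε x δ y := by
  match x, y with
  | none, none => exact zero_le_one
  | none, some _ => exact le_rfl
  | some s, none => rw [transCan]; exact sub_nonneg.2 (massCan_le_one s δ)
  | some s, some t =>
    rw [transCan]
    exact Set.indicator_nonneg
      (fun _ _ => div_nonneg (massCan_nonneg hε s δ) (Nat.cast_nonneg _)) t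

theorem transCan_le_one (hSgm : Sgm.Finite) (hε : 0 ≤ ε) (x : Option (CanState Pf Sgm))
    (δ : A → CanD Sgm) (y : Option (CanState Pf Sgm)) : transCan ε x δ y ≤ 1 := by
  match x, y with
  | none, none => exact le_rfl
  | none, some _ => exact zero_le_one
  | some s, none => rw [transCan]; exact sub_le_self 1 (massCan_nonneg hε s δ)
  | some s, some t =>
    rw [transCan]
    refine Set.indicator_apply_le' (fun ht => ?_) fun _ => zero_le_one
    have := finite_canState (Pf := Pf) hSgm
    have hcard : (1 : ℝ) ≤ (TCan Pf Sgm s δ).ncard := by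
      exact_mod_cast (Set.ncard_pos (TCan Pf Sgm s δ).toFinite).2 ⟨t, ht⟩
    exact div_le_one_of_le₀ ((massCan_le_one s δ).trans hcard) (by positivity)

theorem tsum_transCan_some_some (hSgm : Sgm.Finite) (s : CanState Pf Sgm) (δ : A → CanD Sgm) :
    ∑' t, transCan ε (some s) δ (some t) = massCan ε s δ := by
  have := finite_canState (Pf := Pf) hSgm
  simp only [transCan]
  rw [← tsum_subtype, tsum_const, Nat.card_coe_set_eq, nsmul_eq_mul]
  rcases (TCan Pf Sgm s δ).eq_empty_or_nonempty with hT | hT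
  · simp [massCan, hT]
  · have : ((TCan Pf Sgm s δ).ncard : ℝ) ≠ 0 :=
      Nat.cast_ne_zero.2 ((Set.ncard_pos (Set.toFinite _)).2 hT).ne'
    field_simp

theorem tsum_transCan_some (hSgm : Sgm.Finite) (s : CanState Pf Sgm) (δ : A → CanD Sgm) :
    ∑' t : ↥(({none} : Set (Option (CanState Pf Sgm)))ᶜ), transCan ε (some s) δ t =
      massCan ε s δ := by
  rw [← Set.compl_range_some, compl_compl, tsum_range _ (Option.some_injective _),
    tsum_transCan_some_some hSgm]

theorem hasSum_transCan (hSgm : Sgm.Finite) (x : Option (CanState Pf Sgm)) (δ : A → CanD Sgm) :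
    HasSum (transCan ε x δ) 1 := by
  have := finite_canState (Pf := Pf) hSgm
  have := Fintype.ofFinite (CanState Pf Sgm)
  convert hasSum_fintype (transCan ε x δ)
  rw [Fintype.sum_option, ← tsum_fintype (L := .unconditional _)]
  cases x with
  | none => simp [transCan]
  | some s => rw [tsum_transCan_some_some hSgm]; simp [transCan]

theorem transCan_pos_iff (hSgm : Sgm.Finite) (hε : 0 < ε) {s t : CanState Pf Sgm}
    {δ : A → CanD Sgm} :
    0 < transCan ε (some s) δ (some t) ↔ t ∈ TCan Pf Sgm s δ := by
  rw [transCan]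
  have := finite_canState (Pf := Pf) hSgm
  by_cases ht : t ∈ TCan Pf Sgm s δ
  · simp only [Set.indicator_of_mem ht, ht, iff_true]
    exact div_pos (massCan_pos hε ⟨t, ht⟩)
      (Nat.cast_pos.2 ((Set.ncard_pos (TCan Pf Sgm s δ).toFinite).2 ⟨t, ht⟩))
  · simp [ht]

theorem sat_mod_iff (hSgm : Sgm.Finite) (hε : 0 < ε) {s : CanState Pf Sgm} {C : Set A}
    {p : I01} {ψ : Formula A V} :
    SatGen {none} (transCan ε) (piCan Pf Sgm) (mod C p ψ) (some s) ↔
      ∃ δ : ↥C → CanD Sgm, ∀ δ' : A → CanD Sgm, (∀ a : ↥C, δ' a = δ a) →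
        (p : ℝ) ≤ massCan ε s δ' ∧
          ∀ t ∈ TCan Pf Sgm s δ', SatGen {none} (transCan ε) (piCan Pf Sgm) ψ (some t) := by
  have hsucc : ∀ δ' : A → CanD Sgm, (∀ t, t ∉ ({none} : Set (Option (CanState Pf Sgm))) →
      0 < transCan ε (some s) δ' t → SatGen {none} (transCan ε) (piCan Pf Sgm) ψ t) ↔
      ∀ t ∈ TCan Pf Sgm s δ', SatGen {none} (transCan ε) (piCan Pf Sgm) ψ (some t) := by
    intro δ'
    simp [Option.forall, transCan_pos_iff hSgm hε]
  simp only [SatGen, tsum_transCan_some hSgm, hsucc]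

theorem mod_mem_of_forall_extends (hSgm : Sgm.Finite) (hsub : SubfClosed Sgm)
    (hneg : NegClosed Sgm) (hgap : BelowSubscriptGaps Sgm ε)
    {s : CanState LProof Sgm} {C : Set A} {p : I01} {ψ : Formula A V} (hmod : mod C p ψ ∈ Sgm)
    (δ : ↥C → CanD Sgm)
    (h : ∀ δ' : A → CanD Sgm, (∀ a : ↥C, δ' a = δ a) →
      (p : ℝ) ≤ massCan ε s δ' ∧ ∀ t ∈ TCan LProof Sgm s δ', ψ ∈ t.1) :
    mod C p ψ ∈ s.1 := by
  classical
  have hψ : ψ ∈ Sgm := hsub.2.2 C p ψ hmod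
  -- players outside `C` announce the probability `2`, which matches no modality
  let δ' : A → CanD Sgm := fun a => if ha : a ∈ C then δ ⟨a, ha⟩ else (⟨ψ, hψ⟩, 2)
  have hout : ∀ a ∉ C, 1 < (δ' a).2 := fun a ha => by simp [δ', ha]
  obtain ⟨hmass, hsucc⟩ := h δ' fun a => dif_pos a.2
  by_contra hnot
  by_cases hder : Deriv LProof (forcedCan s δ') ψ
  · have hμ : muCan LProof Sgm s δ' < p := lt_of_not_ge fun hp =>
      hnot (s.2.mem_of_deriv hmod (deriv_mod_of_deriv_forcedCan hSgm hout hder hp))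
    have hp : (p : ℝ) ∈ subscripts Sgm := Set.mem_insert_of_mem _ ⟨mod C p ψ, hmod, rfl⟩
    exact (massCan_lt hSgm hgap hp hμ).not_ge hmass
  · obtain ⟨u, hu, humax, hψu⟩ :=
      exists_maxConsistentIn_notMem hSgm hsub hneg (forcedCan_subset hsub s δ') hψ hder
    exact hψu (hsucc ⟨u, humax⟩ hu)

theorem sat_some_iff_mem (hSgm : Sgm.Finite) (hsub : SubfClosed Sgm) (hneg : NegClosed Sgm)
    (hε : 0 < ε) (hgap : BelowSubscriptGaps Sgm ε)
    {σ : Formula A V} (hσ : σ ∈ Sgm) (s : CanState LProof Sgm) :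
    SatGen {none} (transCan ε) (piCan LProof Sgm) σ (some s) ↔ σ ∈ s.1 := by
  induction σ generalizing s with
  | var v => simp [SatGen, piCan]
  | falsum => simpa [SatGen] using s.2.falsum_notMem
  | neg ψ ih =>
    have hψ := hsub.1 ψ hσ
    simp only [SatGen, ih hψ, s.2.neg_mem_iff hψ hσ]
  | imp ψ χ ih₁ ih₂ =>
    obtain ⟨hψ, hχ⟩ := hsub.2.1 ψ χ hσ
    simp only [SatGen, ih₁ hψ, ih₂ hχ, s.2.imp_mem_iff hσ hψ hχ]
  | mod C p ψ ih =>
    have hψ := hsub.2.2 C p ψ hσ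
    simp only [sat_mod_iff hSgm hε, ih hψ]
    refine ⟨fun ⟨δ, hδ⟩ => mod_mem_of_forall_extends hSgm hsub hneg hgap hσ δ hδ,
      fun hmem => ?_⟩
    refine ⟨fun _ => (⟨ψ, hψ⟩, p), fun δ' hδ' => ?_⟩
    have hmatch : ∀ a ∈ C, (δ' a).1.1 = ψ ∧ (δ' a).2 = p := fun a ha => by
      simp [hδ' ⟨a, ha⟩]
    exact ⟨le_massCan hSgm hsub hε.le ⟨C, p, ψ, rfl, hmem, hmatch⟩,
      fun t ht => mem_TCan_iff.1 ht ⟨C, p, hmem, hmatch⟩⟩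

noncomputable def gameCan (Pf : Formula A V → Prop) (hSgm : Sgm.Finite) (hne : Sgm.Nonempty)
    (hε : 0 ≤ ε) : Game A V where
  S := Option (CanState Pf Sgm)
  F := {none}
  D := CanD Sgm
  D_nonempty := ⟨(⟨hne.some, hne.some_mem⟩, 0)⟩
  P := transCan ε
  P_nonneg := transCan_nonneg hε
  P_le_one := transCan_le_one hSgm hε
  P_sum := hasSum_transCan hSgm
  pi := piCan Pf Sgm

end Canonical

theorem weak_completeness_L_general (A V : Type) (φ : Formula A V)
    (h : ¬ LProof φ) :
    ∃ (G : Game A V) (s : G.S), s ∉ G.F ∧ ¬ SatGen G.F G.P G.pi φ s := by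
  have hfin := φ.finite_negClosure
  have hφ := φ.mem_negClosure_self
  obtain ⟨ε, hε, hgap⟩ := exists_pos_add_lt_of_finite (finite_subscripts hfin)
  obtain ⟨s, -, hs, hφs⟩ := exists_maxConsistentIn_notMem hfin φ.subfClosed_negClosure
    φ.negClosed_negClosure (Set.empty_subset _) hφ fun hd => h (LProof.of_deriv_empty hd)
  have htruth := sat_some_iff_mem hfin φ.subfClosed_negClosure φ.negClosed_negClosure hε hgap hφ
  exact ⟨gameCan LProof hfin ⟨φ, hφ⟩ hε.le, some ⟨s, hs⟩, Option.some_ne_none _,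
    fun hsat => hφs ((htruth ⟨s, hs⟩).1 hsat)⟩

/-- Weak completeness of L: if φ ∈ Φ and ⊬_L φ, then there is a
stochastic game and a non-failure state s of it such that s ⊮ φ. -/
theorem weak_completeness_L (A V : Type) [Fintype A] (φ : Formula A V)
    (h : ¬ LProof φ) :
    ∃ (G : Game A V) (s : G.S), s ∉ G.F ∧ ¬ SatGen G.F G.P G.pi φ s :=
  weak_completeness_L_general A V φ h
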